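/- Let C = {i·p^j : i ∈ S, 0 ≤ j ≤ a-1}, S a finite set of positive integers coprime to p, and suppose ν is the unique element of S of maximal base-p digit sum. If M_C(N) = s_p(N)/s_p(ν), then there exists w < p^a with N = ν·w and s_p(N) = s_p(ν)·s_p(w) (i.e., the product ν·w is carry-free). -/

import Mathlib

/-!
The base-`p` digit sum `s` is subadditive, submultiplicative and invariant under multiplication
by `p`. Hence a representation of `N` by `m` coins, `t i j` copies of `i * p ^ j`, gives
`s N ≤ ∑ (∑ⱼ t i j) * s i ≤ s ν * m`. When `m = MC N` attains `s N / s ν`, both inequalities are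
equalities: every coin is some `ν * p ^ j`, so `N = ν * w` with `w = ∑ d j * p ^ j` and
`∑ d j = m`, and `s N ≤ s ν * s w ≤ s ν * ∑ d j = s N` gives `s w = ∑ d j`. Since `s n < n`
for `n ≥ p`, this forces every `d j < p`, i.e. `w < p ^ a`.
-/

/-- Sum of the base-`p` digits of `n`. -/
def digitSum (p n : ℕ) : ℕ := (Nat.digits p n).sum

/-- `IsRepr p a S N m` : `N` can be written as a sum of `m` coins (with repetition)
from the coin set `{i * p^j : i ∈ S, 0 ≤ j ≤ a-1}`. -/
def IsRepr (p a : ℕ) (S : Finset ℕ) (N m : ℕ) : Prop :=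
  ∃ t : ℕ → ℕ → ℕ,
    (∑ i ∈ S, ∑ j ∈ Finset.range a, t i j * (i * p ^ j)) = N ∧
    (∑ i ∈ S, ∑ j ∈ Finset.range a, t i j) = m

/-- The minimal number of coins from the coin set needed to sum to `N`. -/
noncomputable def MC (p a : ℕ) (S : Finset ℕ) (N : ℕ) : ℕ :=
  sInf {m | IsRepr p a S N m}

section

variable {p : ℕ}

@[simp]
theorem digitSum_zero (p : ℕ) : digitSum p 0 = 0 := by
  simp [digitSum]

theorem digitSum_le_self (p n : ℕ) : digitSum p n ≤ n := Nat.digit_sum_le p n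

theorem digitSum_eq_mod_add_div (hp : 1 < p) (n : ℕ) :
    digitSum p n = n % p + digitSum p (n / p) := by
  rcases n.eq_zero_or_pos with rfl | hn
  · simp
  · rw [digitSum, Nat.digits_def' hp hn, List.sum_cons, digitSum]

theorem digitSum_add_le (hp : 1 < p) (x y : ℕ) :
    digitSum p (x + y) ≤ digitSum p x + digitSum p y := by
  rcases (x + y).eq_zero_or_pos with hxy | hxy
  · rw [hxy]; simp
  obtain ⟨carry, hcarry_def⟩ : ∃ carry, (x % p + y % p) / p = carry := ⟨_, rfl⟩
  have hsplit : x + y = (x % p + y % p) + p * (x / p + y / p) := by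
    have := Nat.div_add_mod x p; have := Nat.div_add_mod y p; linarith
  have hdiv : (x + y) / p = x / p + y / p + carry := by
    rw [hsplit, Nat.add_mul_div_left _ _ (by omega), hcarry_def]; ring
  have hmod : (x + y) % p + p * carry = x % p + y % p := by
    rw [hsplit, Nat.add_mul_mod_self_left, ← hcarry_def, Nat.mod_add_div]
  have hlt : x / p + y / p + carry < x + y := hdiv ▸ Nat.div_lt_self hxy hp
  -- a carry out of the units digit costs `p` there and adds only `carry` to the higher digits
  have hcarry_le : carry ≤ p * carry := Nat.le_mul_of_pos_left carry (by omega)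
  have hsub_carry := digitSum_add_le hp (x / p + y / p) carry
  have hquot := digitSum_add_le hp (x / p) (y / p)
  have := digitSum_le_self p carry
  rw [digitSum_eq_mod_add_div hp (x + y), digitSum_eq_mod_add_div hp x,
    digitSum_eq_mod_add_div hp y, hdiv]
  omega
termination_by x + y
decreasing_by
  all_goals omega

theorem digitSum_sum_le (hp : 1 < p) {ι : Type*} (s : Finset ι) (f : ι → ℕ) :
    digitSum p (∑ i ∈ s, f i) ≤ ∑ i ∈ s, digitSum p (f i) :=
  Finset.le_sum_of_subadditive _ (digitSum_zero p).le (digitSum_add_le hp) s f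

theorem digitSum_mul_le_mul_digitSum (hp : 1 < p) (c x : ℕ) :
    digitSum p (c * x) ≤ c * digitSum p x := by
  simpa using digitSum_sum_le hp (Finset.range c) fun _ => x

theorem digitSum_mul_pow (hp : 1 < p) (n k : ℕ) : digitSum p (n * p ^ k) = digitSum p n := by
  rcases n.eq_zero_or_pos with rfl | hn
  · simp
  · rw [digitSum, mul_comm, Nat.digits_base_pow_mul hp hn]
    simp [digitSum]

theorem digitSum_mul_le (hp : 1 < p) (x y : ℕ) :
    digitSum p (x * y) ≤ digitSum p x * digitSum p y := by
  induction y using Nat.strong_induction_on with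
  | _ y ih =>
  rcases y.eq_zero_or_pos with rfl | hy
  · simp
  have hsplit : x * y = (y % p) * x + x * (y / p) * p ^ 1 := by
    conv_lhs => rw [← Nat.mod_add_div y p]
    ring
  calc digitSum p (x * y)
      ≤ (y % p) * digitSum p x + digitSum p (x * (y / p)) := by
        rw [hsplit, ← digitSum_mul_pow hp (x * (y / p)) 1]
        exact (digitSum_add_le hp _ _).trans
          (Nat.add_le_add_right (digitSum_mul_le_mul_digitSum hp _ _) _)
    _ ≤ (y % p) * digitSum p x + digitSum p x * digitSum p (y / p) :=
        Nat.add_le_add_left (ih _ (Nat.div_lt_self hy hp)) _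
    _ = digitSum p x * digitSum p y := by
        rw [digitSum_eq_mod_add_div hp y]; ring

theorem lt_of_digitSum_eq_self (hp : 1 < p) {n : ℕ} (h : digitSum p n = n) : n < p := by
  by_contra! hpn
  have hq : 0 < n / p := Nat.div_pos hpn (by omega)
  have hdiv := Nat.mod_add_div n p
  have hpq : 2 * (n / p) ≤ p * (n / p) := Nat.mul_le_mul_right _ hp
  have := digitSum_le_self p (n / p)
  rw [digitSum_eq_mod_add_div hp] at h
  omega

theorem digitSum_pos {n : ℕ} (hn : n ≠ 0) : 0 < digitSum p n :=
  (Nat.pos_of_ne_zero (Nat.getLast_digit_ne_zero p hn)).trans_le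
    (List.le_sum_of_mem (List.getLast_mem _))

theorem digitSum_sum_mul_pow_le (hp : 1 < p) (s : Finset ℕ) (d : ℕ → ℕ) :
    digitSum p (∑ j ∈ s, d j * p ^ j) ≤ ∑ j ∈ s, d j :=
  (digitSum_sum_le hp s _).trans <| Finset.sum_le_sum fun j _ => by
    rw [digitSum_mul_pow hp]; exact digitSum_le_self p _

theorem sum_range_mul_pow_lt_pow (a : ℕ) {d : ℕ → ℕ} (hd : ∀ j < a, d j < p) :
    ∑ j ∈ Finset.range a, d j * p ^ j < p ^ a := by
  induction a with
  | zero => simp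
  | succ a ih =>
    rw [Finset.sum_range_succ, pow_succ]
    have hlt := ih fun j hj => hd j (by omega)
    have hda : (d a + 1) * p ^ a ≤ p * p ^ a := Nat.mul_le_mul_right _ (hd a (by omega))
    linarith

theorem sum_range_mul_pow_lt_pow_of_sum_le_digitSum (hp : 1 < p) (a : ℕ) {d : ℕ → ℕ}
    (h : ∑ j ∈ Finset.range a, d j ≤ digitSum p (∑ j ∈ Finset.range a, d j * p ^ j)) :
    ∑ j ∈ Finset.range a, d j * p ^ j < p ^ a := by
  have hdigits : ∑ j ∈ Finset.range a, digitSum p (d j) = ∑ j ∈ Finset.range a, d j := by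
    refine le_antisymm (Finset.sum_le_sum fun j _ => digitSum_le_self p _) (h.trans ?_)
    refine (digitSum_sum_le hp _ _).trans_eq (Finset.sum_congr rfl fun j _ => ?_)
    exact digitSum_mul_pow hp _ _
  refine sum_range_mul_pow_lt_pow a fun j hj => lt_of_digitSum_eq_self hp ?_
  exact (Finset.sum_eq_sum_iff_of_le fun j _ => digitSum_le_self p (d j)).1 hdigits j
    (Finset.mem_range.2 hj)

theorem eq_zero_of_lt_of_mul_sum_le_sum_mul {ι : Type*} {s : Finset ι} {T f : ι → ℕ} {c : ℕ}
    (hf : ∀ i ∈ s, f i ≤ c) (h : c * ∑ i ∈ s, T i ≤ ∑ i ∈ s, T i * f i)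
    {i : ι} (hi : i ∈ s) (hfi : f i < c) : T i = 0 := by
  have hle : ∀ i ∈ s, T i * f i ≤ T i * c := fun i hi => Nat.mul_le_mul_left _ (hf i hi)
  have heq : ∑ i ∈ s, T i * f i = ∑ i ∈ s, T i * c := by
    refine le_antisymm (Finset.sum_le_sum hle) ?_
    rwa [← Finset.sum_mul, mul_comm]
  by_contra hT
  exact (Nat.mul_lt_mul_of_pos_left hfi (Nat.pos_of_ne_zero hT)).ne
    ((Finset.sum_eq_sum_iff_of_le hle).1 heq i hi)

theorem sum_range_mul_mul_pow (i a : ℕ) (t : ℕ → ℕ) :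
    ∑ j ∈ Finset.range a, t j * (i * p ^ j) = i * ∑ j ∈ Finset.range a, t j * p ^ j := by
  rw [Finset.mul_sum]
  exact Finset.sum_congr rfl fun j _ => by ring

theorem digitSum_sum_coins_le (hp : 1 < p) (a : ℕ) (S : Finset ℕ) (t : ℕ → ℕ → ℕ) :
    digitSum p (∑ i ∈ S, ∑ j ∈ Finset.range a, t i j * (i * p ^ j)) ≤
      ∑ i ∈ S, (∑ j ∈ Finset.range a, t i j) * digitSum p i := by
  refine (digitSum_sum_le hp _ _).trans (Finset.sum_le_sum fun i _ => ?_)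
  rw [sum_range_mul_mul_pow, mul_comm _ (digitSum p i)]
  exact (digitSum_mul_le hp _ _).trans
    (Nat.mul_le_mul_left _ (digitSum_sum_mul_pow_le hp _ _))

theorem isRepr_MC_of_ne_zero {a : ℕ} {S : Finset ℕ} {N : ℕ} (h : MC p a S N ≠ 0) :
    IsRepr p a S N (MC p a S N) :=
  Nat.sInf_mem (Nat.nonempty_of_pos_sInf (Nat.pos_of_ne_zero h))

theorem IsRepr.exists_eq_mul_of_mul_eq_digitSum {a : ℕ} (hp : 1 < p) {S : Finset ℕ} {ν : ℕ}
    (hν : ν ∈ S) (hmax : ∀ i ∈ S, i ≠ ν → digitSum p i < digitSum p ν) {N m : ℕ}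
    (hrepr : IsRepr p a S N m) (heq : digitSum p ν * m = digitSum p N) :
    ∃ d : ℕ → ℕ, N = ν * ∑ j ∈ Finset.range a, d j * p ^ j ∧ ∑ j ∈ Finset.range a, d j = m := by
  obtain ⟨t, hsum, hcount⟩ := hrepr
  have hcoins : digitSum p ν * ∑ i ∈ S, ∑ j ∈ Finset.range a, t i j ≤
      ∑ i ∈ S, (∑ j ∈ Finset.range a, t i j) * digitSum p i := by
    rw [hcount, heq, ← hsum]
    exact digitSum_sum_coins_le hp a S t
  have hvanish : ∀ i ∈ S, i ≠ ν → ∀ j ∈ Finset.range a, t i j = 0 := fun i hi hne =>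
    Finset.sum_eq_zero_iff.1 <| eq_zero_of_lt_of_mul_sum_le_sum_mul
      (fun i hi => (eq_or_ne i ν).elim (fun h => h ▸ le_rfl) (fun h => (hmax i hi h).le))
      hcoins hi (hmax i hi hne)
  refine ⟨t ν, ?_, ?_⟩
  · rw [← hsum, Finset.sum_eq_single_of_mem ν hν fun i hi hne => Finset.sum_eq_zero fun j hj => by
      rw [hvanish i hi hne j hj, zero_mul], sum_range_mul_mul_pow]
  · rw [← hcount]
    exact (Finset.sum_eq_single_of_mem ν hν fun i hi hne =>
      Finset.sum_eq_zero (hvanish i hi hne)).symm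

end

theorem keyLemma_carryFree_factorization_of_eq_general (p a : ℕ) (hp : p.Prime)
    (S : Finset ℕ)
    (ν : ℕ) (hν : ν ∈ S)
    (hmax : ∀ i ∈ S, i ≠ ν → digitSum p i < digitSum p ν)
    (N : ℕ) (heq : digitSum p ν * MC p a S N = digitSum p N) :
    ∃ w : ℕ, w < p ^ a ∧ N = ν * w ∧
      digitSum p N = digitSum p ν * digitSum p w := by
  rcases eq_or_ne N 0 with rfl | hN
  · exact ⟨0, pow_pos hp.pos a, by simp, by simp⟩
  have hpos : 0 < digitSum p ν * MC p a S N := heq ▸ digitSum_pos hN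
  obtain ⟨d, hNw, hcount⟩ := IsRepr.exists_eq_mul_of_mul_eq_digitSum hp.one_lt hν hmax
    (isRepr_MC_of_ne_zero (Nat.pos_of_mul_pos_left hpos).ne') heq
  set w := ∑ j ∈ Finset.range a, d j * p ^ j
  have hwm : digitSum p w ≤ MC p a S N := hcount ▸ digitSum_sum_mul_pow_le hp.one_lt _ _
  have hmw : MC p a S N ≤ digitSum p w := by
    refine Nat.le_of_mul_le_mul_left ?_ (Nat.pos_of_mul_pos_right hpos)
    rw [heq, hNw]
    exact digitSum_mul_le hp.one_lt ν w
  refine ⟨w, sum_range_mul_pow_lt_pow_of_sum_le_digitSum hp.one_lt a (hcount ▸ hmw), hNw, ?_⟩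
  rw [← heq, le_antisymm hwm hmw]

theorem keyLemma_carryFree_factorization_of_eq (p a : ℕ) (hp : p.Prime) (ha : 1 ≤ a)
    (S : Finset ℕ) (hS : ∀ i ∈ S, 0 < i ∧ Nat.Coprime i p)
    (ν : ℕ) (hν : ν ∈ S)
    (hmax : ∀ i ∈ S, i ≠ ν → digitSum p i < digitSum p ν)
    (N : ℕ) (heq : digitSum p ν * MC p a S N = digitSum p N) :
    ∃ w : ℕ, w < p ^ a ∧ N = ν * w ∧
      digitSum p N = digitSum p ν * digitSum p w :=
  keyLemma_carryFree_factorization_of_eq_general p a hp S ν hν hmax N heq
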